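/- In the bracket expression, Σ_{l=1}^n ( ∏_{j ∈ [n]∖{l}, i ∈ [n]∖{j}} [α_i, α_j] · ∏_{k ∈ [n−2]} [β_k, α_l] ) = 0 for any vectors α_1,…,α_n, β_1,…,β_{n−2} ∈ k². -/

import Mathlib

/-!
If two of the `αᵢ` are proportional, every summand has a vanishing factor. Otherwise, dividing
the `l`-th summand by `∏_{i ≠ j} [αᵢ, αⱼ]` leaves `f(αₗ) / ∏_{j ≠ l} [αⱼ, αₗ]` with
`f(x) = ∏ₖ [βₖ, x]`, so the sum is a homogeneous divided difference of order `n - 1` of a form of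
degree `n - 2`, which vanishes. This is proved by induction on the degree: the Plücker relation
writes `[β₀, x]` as a combination of `[α_p, x]` and `[α_q, x]`, and multiplying `f` by `[α_r, x]`
amounts to deleting the node `α_r`.
-/

open Finset

/-- The bracket `[u,v] = u₀v₁ - v₀u₁`. -/
def bracket {k : Type*} [CommRing k] (u v : Fin 2 → k) : k := u 0 * v 1 - v 0 * u 1

section CommRing

variable {k : Type*} [CommRing k]

lemma bracket_self (u : Fin 2 → k) : bracket u u = 0 := by
  simp [bracket]

lemma bracket_comm (u v : Fin 2 → k) : bracket v u = -bracket u v := by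
  unfold bracket; ring

lemma bracket_mul_bracket (u v b x : Fin 2 → k) :
    bracket u v * bracket b x = bracket b v * bracket u x + bracket u b * bracket v x := by
  unfold bracket; ring

end CommRing

section Field

variable {k : Type*} [Field k]

lemma bracket_eq_of_bracket_ne_zero {u v : Fin 2 → k} (huv : bracket u v ≠ 0) (b x : Fin 2 → k) :
    bracket b x =
      bracket b v / bracket u v * bracket u x + bracket u b / bracket u v * bracket v x := by
  field_simp
  rw [mul_comm, bracket_mul_bracket]

variable {ι : Type*} [DecidableEq ι]

def bracketDividedDifference (s : Finset ι) (α : ι → Fin 2 → k) (f : ι → k) : k :=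
  ∑ l ∈ s, f l * ∏ j ∈ s.erase l, (bracket (α j) (α l))⁻¹

lemma bracketDividedDifference_add_mul (s : Finset ι) (α : ι → Fin 2 → k) (a c : k)
    (f g : ι → k) :
    bracketDividedDifference s α (fun l => a * f l + c * g l) =
      a * bracketDividedDifference s α f + c * bracketDividedDifference s α g := by
  simp only [bracketDividedDifference, mul_sum, ← sum_add_distrib]
  exact sum_congr rfl fun _ _ => by ring

lemma bracketDividedDifference_bracket_mul {s : Finset ι} {α : ι → Fin 2 → k}
    (hα : (s : Set ι).Pairwise fun i j => bracket (α i) (α j) ≠ 0) {r : ι} (hr : r ∈ s)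
    (g : ι → k) :
    bracketDividedDifference s α (fun l => bracket (α r) (α l) * g l) =
      bracketDividedDifference (s.erase r) α g := by
  unfold bracketDividedDifference
  rw [← sum_erase (a := r) _ (by simp only [bracket_self, zero_mul])]
  refine sum_congr rfl fun l hl => ?_
  obtain ⟨hlr, hls⟩ := mem_erase.1 hl
  have hrl : bracket (α r) (α l) ≠ 0 := hα hr hls (Ne.symm hlr)
  rw [← mul_prod_erase _ _ (mem_erase.2 ⟨Ne.symm hlr, hr⟩), erase_right_comm]
  field_simp

theorem bracketDividedDifference_prod_bracket_eq_zero (m : ℕ) {s : Finset ι}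
    {α : ι → Fin 2 → k} (hα : (s : Set ι).Pairwise fun i j => bracket (α i) (α j) ≠ 0)
    (hs : #s = m + 2) (β : Fin m → Fin 2 → k) :
    bracketDividedDifference s α (fun l => ∏ t, bracket (β t) (α l)) = 0 := by
  induction m generalizing s with
  | zero =>
    obtain ⟨p, q, hpq, rfl⟩ := card_eq_two.1 hs
    simp [bracketDividedDifference, sum_pair hpq, hpq, erase_insert_eq_erase, erase_insert_of_ne hpq,
      bracket_comm (α p) (α q)]
  | succ m ih =>
    obtain ⟨p, hp, q, hq, hpq⟩ := one_lt_card.1 (show 1 < #s by omega)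
    have hsub : ∀ r, ((s.erase r : Finset ι) : Set ι).Pairwise
        fun i j => bracket (α i) (α j) ≠ 0 :=
      fun r => hα.mono (coe_subset.2 (erase_subset r s))
    have hcard : ∀ r ∈ s, #(s.erase r) = m + 2 := fun r hr => by
      rw [card_erase_of_mem hr]; omega
    have hsplit : (fun l => ∏ t, bracket (β t) (α l)) = fun l =>
        bracket (β 0) (α q) / bracket (α p) (α q) *
            (bracket (α p) (α l) * ∏ t : Fin m, bracket (β t.succ) (α l)) +
          bracket (α p) (β 0) / bracket (α p) (α q) *
            (bracket (α q) (α l) * ∏ t : Fin m, bracket (β t.succ) (α l)) := by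
      funext l
      rw [Fin.prod_univ_succ, bracket_eq_of_bracket_ne_zero (hα hp hq hpq)]
      ring
    rw [hsplit, bracketDividedDifference_add_mul, bracketDividedDifference_bracket_mul hα hp,
      bracketDividedDifference_bracket_mul hα hq, ih (hsub p) (hcard p hp),
      ih (hsub q) (hcard q hq), mul_zero, mul_zero, add_zero]

lemma prod_erase_prod_erase_bracket_eq_zero [Fintype ι] {α : ι → Fin 2 → k} {i j : ι}
    (hij : i ≠ j) (h : bracket (α i) (α j) = 0) (l : ι) :
    ∏ j ∈ univ.erase l, ∏ i ∈ univ.erase j, bracket (α i) (α j) = 0 := by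
  rcases eq_or_ne j l with rfl | hjl
  · refine prod_eq_zero (mem_erase.2 ⟨hij, mem_univ i⟩) (prod_eq_zero
      (mem_erase.2 ⟨Ne.symm hij, mem_univ j⟩) ?_)
    rw [bracket_comm, h, neg_zero]
  · exact prod_eq_zero (mem_erase.2 ⟨hjl, mem_univ j⟩)
      (prod_eq_zero (mem_erase.2 ⟨hij, mem_univ i⟩) h)

end Field

theorem bracket_sum_eq_zero_general {k : Type*} [Field k] (n : ℕ) (hn : 2 ≤ n)
    (α : Fin n → Fin 2 → k) (β : Fin (n - 2) → Fin 2 → k) :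
    ∑ l : Fin n,
      ((∏ j ∈ Finset.univ.erase l, ∏ i ∈ Finset.univ.erase j, bracket (α i) (α j)) *
        ∏ m : Fin (n - 2), bracket (β m) (α l)) = 0 := by
  by_cases hα : ((univ : Finset (Fin n)) : Set (Fin n)).Pairwise
      fun i j => bracket (α i) (α j) ≠ 0
  · set C := ∏ j, ∏ i ∈ univ.erase j, bracket (α i) (α j)
    have hterm : ∀ l, ∏ j ∈ univ.erase l, ∏ i ∈ univ.erase j, bracket (α i) (α j) =
        C * ∏ i ∈ univ.erase l, (bracket (α i) (α l))⁻¹ := fun l => by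
      have hl : ∏ i ∈ univ.erase l, bracket (α i) (α l) ≠ 0 := prod_ne_zero_iff.2
        fun i hi => hα (mem_univ i) (mem_univ l) (mem_erase.1 hi).1
      rw [prod_inv_distrib, eq_mul_inv_iff_mul_eq₀ hl, mul_comm]
      exact mul_prod_erase univ (fun j => ∏ i ∈ univ.erase j, bracket (α i) (α j)) (mem_univ l)
    calc _ = C * bracketDividedDifference univ α fun l => ∏ m, bracket (β m) (α l) := by
          simp only [bracketDividedDifference, mul_sum, hterm]
          exact sum_congr rfl fun _ _ => by ring
      _ = 0 := by
        rw [bracketDividedDifference_prod_bracket_eq_zero (n - 2) hα (by simp; omega),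
          mul_zero]
  · obtain ⟨i, -, j, -, hij, h⟩ : ∃ i ∈ (univ : Finset (Fin n)), ∃ j ∈ (univ : Finset (Fin n)),
        i ≠ j ∧ bracket (α i) (α j) = 0 := by
      simpa [Set.Pairwise] using hα
    exact sum_eq_zero fun l _ => by rw [prod_erase_prod_erase_bracket_eq_zero hij h, zero_mul]

/-- The bracket-polynomial form of `DR_{n,1} = 0`:
`Σ_{l=1}^n ( ∏_{j ≠ l, i ≠ j} [αᵢ,αⱼ] · ∏_k [βₖ,αₗ] ) = 0` for any vectors
`α₁,…,αₙ, β₁,…,β_{n-2} ∈ k²`. -/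
theorem bracket_sum_eq_zero {k : Type*} [Field k] [CharZero k] (n : ℕ) (hn : 2 ≤ n)
    (α : Fin n → Fin 2 → k) (β : Fin (n - 2) → Fin 2 → k) :
    ∑ l : Fin n,
      ((∏ j ∈ Finset.univ.erase l, ∏ i ∈ Finset.univ.erase j, bracket (α i) (α j)) *
        ∏ m : Fin (n - 2), bracket (β m) (α l)) = 0 :=
  bracket_sum_eq_zero_general n hn α β
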